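/- arXiv:1312.5901 — 2 statements merged into one kernel-verified Lean document; each statement's English description precedes it below -/
import Mathlib

section
/- Let {X(t)} be a time-homogeneous, simple, conservative, stable continuous-time Markov counting process with rate function λ_X, and let {N(t)} be an independent unit-rate Poisson process. Then the time-changed process S(t) = X(N(t)) is a Markov process whose transition rate from state s to state s+k (k ≥ 1) equals P(X(1) = s+k | X(0) = s). -/
open Filter Topology

/-- Transition semigroup of a time-homogeneous conservative Markov counting process:
`P t x y` is the probability of being in state `y` at time `t` given state `x` at time `0`. -/
structure MarkovCountingSemigroup (P : ℝ → ℕ → ℕ → ℝ) : Prop where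
  nonneg : ∀ t x y, 0 ≤ t → 0 ≤ P t x y
  init : ∀ x y, P 0 x y = if x = y then 1 else 0
  counting : ∀ t x y, 0 ≤ t → y < x → P t x y = 0
  conservative : ∀ t x, 0 ≤ t → (∑' y : ℕ, P t x y) = 1
  chapman : ∀ t u x y, 0 ≤ t → 0 ≤ u →
    P (t + u) x y = ∑' z : ℕ, P t x z * P u z y

/-- The process is simple (only jumps of size one, i.e. the rate of jumps of size `k ≥ 2`
vanishes) and stable with (finite) rate function `lam`. -/
def IsSimpleStable (P : ℝ → ℕ → ℕ → ℝ) (lam : ℕ → ℝ) : Prop :=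
  (∀ x, Tendsto (fun h : ℝ => (1 - P h x x) / h) (𝓝[>] 0) (𝓝 (lam x))) ∧
  (∀ x, Tendsto (fun h : ℝ => P h x (x + 1) / h) (𝓝[>] 0) (𝓝 (lam x))) ∧
  (∀ x k, 2 ≤ k → Tendsto (fun h : ℝ => P h x (x + k) / h) (𝓝[>] 0) (𝓝 0))

/-- Poisson probability mass function with mean `t`. -/
noncomputable def poissonPMF (t : ℝ) (n : ℕ) : ℝ :=
  Real.exp (-t) * t ^ n / n.factorial

/-- Transition probabilities of the time-changed process `S(t) = X(N(t))`, where `N` is a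
unit-rate Poisson process independent of `X`: the Poisson mixture of those of `X`. -/
noncomputable def timeChanged (P : ℝ → ℕ → ℕ → ℝ) (t : ℝ) (x y : ℕ) : ℝ :=
  ∑' n : ℕ, poissonPMF t n * P (n : ℝ) x y

/-! `S` is the Poisson mixture `S_t = ∑ₙ π_t(n) P_n` of the integer-time skeleton of `P`.
Chapman–Kolmogorov for `S` comes from that of the skeleton and `π_{t+u} = π_t ∗ π_u`; the triple
series is rearranged in `ℝ≥0∞`, where no summability has to be checked. For the rate, `P_0 x y = 0`
when `x ≠ y`, so `S_h x y = h e^{-h} P_1 x y + R` with `|R| ≤ ∑_{n ≥ 2} π_h(n) ≤ h (1 - e^{-h})`. -/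

open Finset
open scoped ENNReal

theorem poissonPMF_nonneg {t : ℝ} (ht : 0 ≤ t) (n : ℕ) : 0 ≤ poissonPMF t n := by
  unfold poissonPMF; positivity

theorem hasSum_poissonPMF (t : ℝ) : HasSum (poissonPMF t) 1 := by
  have h := (NormedSpace.expSeries_div_hasSum_exp t).mul_left (Real.exp (-t))
  rw [← Real.exp_eq_exp_ℝ, ← Real.exp_add, neg_add_cancel, Real.exp_zero] at h
  exact h.congr_fun fun n => by rw [poissonPMF, mul_div_assoc]

theorem poissonPMF_one (t : ℝ) : poissonPMF t 1 = Real.exp (-t) * t := by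
  simp [poissonPMF]

theorem poissonPMF_add (t u : ℝ) (n : ℕ) :
    poissonPMF (t + u) n = ∑ ij ∈ antidiagonal n, poissonPMF t ij.1 * poissonPMF u ij.2 := by
  rw [poissonPMF, (Commute.all t u).add_pow', mul_sum, sum_div]
  refine sum_congr rfl fun ij hij => ?_
  rw [← mem_antidiagonal.mp hij, nsmul_eq_mul, Nat.cast_add_choose, poissonPMF, poissonPMF,
    neg_add, Real.exp_add]
  field_simp

theorem ofReal_poissonPMF_add {t u : ℝ} (ht : 0 ≤ t) (hu : 0 ≤ u) (n : ℕ) :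
    ENNReal.ofReal (poissonPMF (t + u) n) = ∑ ij ∈ antidiagonal n,
      ENNReal.ofReal (poissonPMF t ij.1) * ENNReal.ofReal (poissonPMF u ij.2) := by
  rw [poissonPMF_add, ENNReal.ofReal_sum_of_nonneg fun ij _ =>
    mul_nonneg (poissonPMF_nonneg ht _) (poissonPMF_nonneg hu _)]
  exact sum_congr rfl fun ij _ => ENNReal.ofReal_mul (poissonPMF_nonneg ht _)

theorem tsum_poissonPMF_nat_add_two (t : ℝ) :
    ∑' n, poissonPMF t (n + 2) = 1 - Real.exp (-t) - t * Real.exp (-t) := by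
  have h := (hasSum_poissonPMF t).summable.sum_add_tsum_nat_add 2
  rw [(hasSum_poissonPMF t).tsum_eq, sum_range_succ, sum_range_one] at h
  simp only [poissonPMF] at h ⊢
  norm_num at h
  linarith

theorem norm_tsum_poissonPMF_mul_div_sub_le {f : ℕ → ℝ} (hf0 : f 0 = 0) (hf : ∀ n, |f n| ≤ 1)
    {h : ℝ} (hh : 0 < h) :
    ‖(∑' n, poissonPMF h n * f n) / h - Real.exp (-h) * f 1‖ ≤ 1 - Real.exp (-h) := by
  have hterm : ∀ n, ‖poissonPMF h n * f n‖ ≤ poissonPMF h n := fun n => by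
    rw [norm_mul, Real.norm_of_nonneg (poissonPMF_nonneg hh.le n)]
    exact mul_le_of_le_one_right (poissonPMF_nonneg hh.le n) (hf n)
  have hsum : Summable fun n => poissonPMF h n * f n :=
    .of_norm_bounded (hasSum_poissonPMF h).summable hterm
  have hsplit := hsum.sum_add_tsum_nat_add 2
  rw [sum_range_succ, sum_range_one, hf0, mul_zero, zero_add] at hsplit
  have htail : ‖∑' n, poissonPMF h (n + 2) * f (n + 2)‖ ≤ 1 - Real.exp (-h) - h * Real.exp (-h) :=
    tsum_of_norm_bounded (tsum_poissonPMF_nat_add_two h ▸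
      ((summable_nat_add_iff 2).mpr (hasSum_poissonPMF h).summable).hasSum) fun n => hterm _
  rw [← hsplit, poissonPMF_one, div_sub' hh.ne', norm_div, Real.norm_of_nonneg hh.le,
    div_le_iff₀ hh]
  calc _ = ‖∑' n, poissonPMF h (n + 2) * f (n + 2)‖ := by congr 1; ring
    _ ≤ 1 - Real.exp (-h) - h * Real.exp (-h) := htail
    _ ≤ (1 - Real.exp (-h)) * h := by linarith [Real.one_sub_le_exp_neg h]

theorem tendsto_tsum_poissonPMF_mul_div {f : ℕ → ℝ} (hf0 : f 0 = 0) (hf : ∀ n, |f n| ≤ 1) :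
    Tendsto (fun h => (∑' n, poissonPMF h n * f n) / h) (𝓝[>] 0) (𝓝 (f 1)) := by
  have hexp : Tendsto (fun h : ℝ => Real.exp (-h)) (𝓝[>] 0) (𝓝 1) := by
    have := (Real.continuous_exp.comp continuous_neg).tendsto (0 : ℝ)
    simpa [Function.comp_def] using this.mono_left (nhdsWithin_le_nhds (s := Set.Ioi 0))
  have hrem : Tendsto (fun h => (∑' n, poissonPMF h n * f n) / h - Real.exp (-h) * f 1)
      (𝓝[>] 0) (𝓝 0) := by
    refine squeeze_zero_norm' (eventually_nhdsWithin_of_forall fun h hh =>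
      norm_tsum_poissonPMF_mul_div_sub_le hf0 hf hh) ?_
    simpa using (tendsto_const_nhds (x := (1 : ℝ))).sub hexp
  simpa using hrem.add (hexp.mul_const (f 1))

theorem ENNReal.tsum_mul_tsum_eq_tsum_sum_antidiagonal (f g : ℕ → ℝ≥0∞) :
    (∑' n, f n) * ∑' n, g n = ∑' n, ∑ kl ∈ antidiagonal n, f kl.1 * g kl.2 := by
  calc (∑' n, f n) * ∑' n, g n = ∑' kl : ℕ × ℕ, f kl.1 * g kl.2 := by
        rw [ENNReal.tsum_prod', ← ENNReal.tsum_mul_right]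
        simp_rw [ENNReal.tsum_mul_left]
    _ = ∑' c : (n : ℕ) × antidiagonal n, f (c.2 : ℕ × ℕ).1 * g (c.2 : ℕ × ℕ).2 :=
        (HasAntidiagonal.sigmaAntidiagonalEquivProd.tsum_eq _).symm
    _ = _ := by
        rw [ENNReal.tsum_sigma']
        simp_rw [Finset.tsum_subtype (antidiagonal _) fun kl => f kl.1 * g kl.2]

theorem tsum_conv_mul_eq_tsum_mul_tsum_of_chapman {ι : Type*} {p q r : ℕ → ℝ≥0∞}
    {K : ℕ → ι → ι → ℝ≥0∞} (hconv : ∀ n, r n = ∑ ij ∈ antidiagonal n, p ij.1 * q ij.2)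
    (hK : ∀ i j x y, K (i + j) x y = ∑' z, K i x z * K j z y) (x y : ι) :
    ∑' n, r n * K n x y = ∑' z, (∑' i, p i * K i x z) * ∑' j, q j * K j z y := by
  calc ∑' n, r n * K n x y
      = ∑' n, ∑ ij ∈ antidiagonal n, ∑' z, p ij.1 * K ij.1 x z * (q ij.2 * K ij.2 z y) := by
        refine tsum_congr fun n => ?_
        rw [hconv, sum_mul]
        refine sum_congr rfl fun ij hij => ?_
        rw [← mem_antidiagonal.mp hij, hK, ← ENNReal.tsum_mul_left]
        exact tsum_congr fun z => by ring
    _ = ∑' z, ∑' n, ∑ ij ∈ antidiagonal n, p ij.1 * K ij.1 x z * (q ij.2 * K ij.2 z y) := by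
        simp_rw [← Summable.tsum_finsetSum fun _ _ => ENNReal.summable]
        exact ENNReal.tsum_comm
    _ = _ := tsum_congr fun z => (ENNReal.tsum_mul_tsum_eq_tsum_sum_antidiagonal
      (fun i => p i * K i x z) fun j => q j * K j z y).symm

namespace MarkovCountingSemigroup

variable {P : ℝ → ℕ → ℕ → ℝ}

theorem summable (hP : MarkovCountingSemigroup P) {t : ℝ} (ht : 0 ≤ t) (x : ℕ) :
    Summable (P t x) := by
  by_contra h
  simpa [tsum_eq_zero_of_not_summable h] using hP.conservative t x ht

theorem le_one (hP : MarkovCountingSemigroup P) {t : ℝ} (ht : 0 ≤ t) (x y : ℕ) :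
    P t x y ≤ 1 :=
  hP.conservative t x ht ▸ (hP.summable ht x).le_tsum y fun z _ => hP.nonneg t x z ht

theorem ofReal_nat_add (hP : MarkovCountingSemigroup P) (i j x y : ℕ) :
    ENNReal.ofReal (P ↑(i + j) x y)
      = ∑' z, ENNReal.ofReal (P i x z) * ENNReal.ofReal (P j z y) := by
  have hi : (0 : ℝ) ≤ i := i.cast_nonneg
  have hj : (0 : ℝ) ≤ j := j.cast_nonneg
  have hprod : ∀ z, 0 ≤ P i x z * P j z y := fun z =>
    mul_nonneg (hP.nonneg _ x z hi) (hP.nonneg _ z y hj)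
  have hsum : Summable fun z => P i x z * P j z y :=
    .of_nonneg_of_le hprod (fun z => mul_le_of_le_one_right (hP.nonneg _ x z hi)
      (hP.le_one hj z y)) (hP.summable hi x)
  rw [Nat.cast_add, hP.chapman _ _ x y hi hj, ENNReal.ofReal_tsum_of_nonneg hprod hsum]
  exact tsum_congr fun z => ENNReal.ofReal_mul (hP.nonneg _ x z hi)

theorem timeChanged_eq_toReal (hP : MarkovCountingSemigroup P) {t : ℝ} (ht : 0 ≤ t)
    (x y : ℕ) :
    timeChanged P t x y
      = (∑' n, ENNReal.ofReal (poissonPMF t n) * ENNReal.ofReal (P n x y)).toReal := by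
  rw [ENNReal.tsum_toReal_eq fun n => ENNReal.mul_ne_top ENNReal.ofReal_ne_top
    ENNReal.ofReal_ne_top]
  refine tsum_congr fun n => ?_
  rw [ENNReal.toReal_mul, ENNReal.toReal_ofReal (poissonPMF_nonneg ht n),
    ENNReal.toReal_ofReal (hP.nonneg _ x y n.cast_nonneg)]

theorem tsum_ofReal_poissonPMF_mul_ne_top (hP : MarkovCountingSemigroup P) {t : ℝ}
    (ht : 0 ≤ t) (x y : ℕ) :
    ∑' n, ENNReal.ofReal (poissonPMF t n) * ENNReal.ofReal (P n x y) ≠ ∞ := by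
  refine ne_top_of_le_ne_top ENNReal.one_ne_top ?_
  calc ∑' n, ENNReal.ofReal (poissonPMF t n) * ENNReal.ofReal (P n x y)
      ≤ ∑' n, ENNReal.ofReal (poissonPMF t n) := ENNReal.tsum_le_tsum fun n =>
        mul_le_of_le_one_right' (ENNReal.ofReal_le_one.mpr (hP.le_one n.cast_nonneg x y))
    _ = 1 := by
      rw [← ENNReal.ofReal_tsum_of_nonneg (poissonPMF_nonneg ht) (hasSum_poissonPMF t).summable,
        (hasSum_poissonPMF t).tsum_eq, ENNReal.ofReal_one]

theorem timeChanged_add (hP : MarkovCountingSemigroup P) {t u : ℝ} (ht : 0 ≤ t) (hu : 0 ≤ u)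
    (x y : ℕ) :
    timeChanged P (t + u) x y = ∑' z, timeChanged P t x z * timeChanged P u z y := by
  have hK := tsum_conv_mul_eq_tsum_mul_tsum_of_chapman
    (p := fun i => ENNReal.ofReal (poissonPMF t i)) (q := fun j => ENNReal.ofReal (poissonPMF u j))
    (K := fun n x y => ENNReal.ofReal (P n x y)) (ofReal_poissonPMF_add ht hu) hP.ofReal_nat_add
  have hfin : ∀ z, (∑' i, ENNReal.ofReal (poissonPMF t i) * ENNReal.ofReal (P i x z)) *
      ∑' j, ENNReal.ofReal (poissonPMF u j) * ENNReal.ofReal (P j z y) ≠ ∞ := fun z =>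
    ENNReal.mul_ne_top (hP.tsum_ofReal_poissonPMF_mul_ne_top ht x z)
      (hP.tsum_ofReal_poissonPMF_mul_ne_top hu z y)
  rw [hP.timeChanged_eq_toReal (add_nonneg ht hu), hK x y, ENNReal.tsum_toReal_eq hfin]
  refine tsum_congr fun z => ?_
  rw [ENNReal.toReal_mul, hP.timeChanged_eq_toReal ht, hP.timeChanged_eq_toReal hu]

theorem tendsto_timeChanged_div (hP : MarkovCountingSemigroup P) {x y : ℕ} (hxy : x ≠ y) :
    Tendsto (fun h => timeChanged P h x y / h) (𝓝[>] 0) (𝓝 (P 1 x y)) := by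
  have hf0 : P (0 : ℕ) x y = 0 := by simp [hP.init, hxy]
  have hf : ∀ n : ℕ, |P n x y| ≤ 1 := fun n => by
    rw [abs_of_nonneg (hP.nonneg _ x y n.cast_nonneg)]
    exact hP.le_one n.cast_nonneg x y
  unfold timeChanged
  simpa using tendsto_tsum_poissonPMF_mul_div hf0 hf

end MarkovCountingSemigroup

theorem stmt0_general (P : ℝ → ℕ → ℕ → ℝ)
    (hP : MarkovCountingSemigroup P) :
    (∀ t u x y, 0 ≤ t → 0 ≤ u →
      timeChanged P (t + u) x y = ∑' z : ℕ, timeChanged P t x z * timeChanged P u z y) ∧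
    (∀ s k : ℕ, 1 ≤ k →
      Tendsto (fun h : ℝ => timeChanged P h s (s + k) / h) (𝓝[>] 0)
        (𝓝 (P 1 s (s + k)))) :=
  ⟨fun _ _ x y ht hu => hP.timeChanged_add ht hu x y,
    fun s k hk => hP.tendsto_timeChanged_div (by omega)⟩

/-- If `X` is a time-homogeneous, simple, conservative, stable Markov
counting process and `N` an independent unit-rate Poisson process, then `S(t) = X(N(t))`
is a Markov process (its transition probabilities satisfy Chapman–Kolmogorov) whose
transition rate from `s` to `s + k` (`k ≥ 1`) equals `P(X(1) = s + k | X(0) = s)`. -/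
theorem stmt0 (P : ℝ → ℕ → ℕ → ℝ) (lam : ℕ → ℝ)
    (hP : MarkovCountingSemigroup P) (hSS : IsSimpleStable P lam) :
    (∀ t u x y, 0 ≤ t → 0 ≤ u →
      timeChanged P (t + u) x y = ∑' z : ℕ, timeChanged P t x z * timeChanged P u z y) ∧
    (∀ s k : ℕ, 1 ≤ k →
      Tendsto (fun h : ℝ => timeChanged P h s (s + k) / h) (𝓝[>] 0)
        (𝓝 (P 1 s (s + k)))) :=
  stmt0_general P hP
end

section
/- Under the hypotheses of the time-change theorem (simple, conservative, stable, time-homogeneous base process X, independent unit-rate Poisson time change N), the rate function of the time-changed process S(t) = X(N(t)) is λ_S(s) = 1 − e^{−λ_X(s)}. -/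
open Filter Topology

/-!
A counting process cannot return to `s` once it has left it, so the diagonal `t ↦ P t s s` is
multiplicative. Hence `P 1 s s = P (1/n) s s ^ n → exp (-λ s)`, and `P n s s = exp (-n λ s)`.
Mixing over the Poisson law turns the diagonal of the time-changed process into the generating
function `exp (h (e^{-λ s} - 1))`, whose slope at `0` gives the rate `1 - e^{-λ s}`.
-/

lemma map_natCast_mul_of_add {d : ℝ → ℝ} (hd0 : d 0 = 1)
    (hd : ∀ t u, 0 ≤ t → 0 ≤ u → d (t + u) = d t * d u) {t : ℝ} (ht : 0 ≤ t) (n : ℕ) :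
    d (n * t) = d t ^ n := by
  induction n with
  | zero => simpa using hd0
  | succ n ih =>
    rw [Nat.cast_succ, add_one_mul, hd _ _ (by positivity) ht, ih, pow_succ]

lemma eq_exp_of_add_of_tendsto {d : ℝ → ℝ} (hd0 : d 0 = 1)
    (hd : ∀ t u, 0 ≤ t → 0 ≤ u → d (t + u) = d t * d u) {l : ℝ}
    (hl : Tendsto (fun h : ℝ => (1 - d h) / h) (𝓝[>] 0) (𝓝 l)) : d 1 = Real.exp (-l) := by
  have hinv : Tendsto (fun n : ℕ => (n : ℝ)⁻¹) atTop (𝓝[>] 0) :=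
    tendsto_inv_atTop_nhdsGT_zero.comp tendsto_natCast_atTop_atTop
  have hscaled : Tendsto (fun n : ℕ => n * (d (n : ℝ)⁻¹ - 1)) atTop (𝓝 (-l)) := by
    refine (hl.comp hinv).neg.congr fun n => ?_
    simp [div_eq_mul_inv, neg_mul_eq_mul_neg, mul_comm]
  refine tendsto_nhds_unique ?_ (Real.tendsto_one_add_pow_exp_of_tendsto hscaled)
  refine tendsto_const_nhds.congr' ?_
  filter_upwards [eventually_ne_atTop 0] with n hn
  rw [add_sub_cancel, ← map_natCast_mul_of_add hd0 hd (by positivity),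
    mul_inv_cancel₀ (by simpa)]

lemma MarkovCountingSemigroup.diag_zero {P : ℝ → ℕ → ℕ → ℝ} (hP : MarkovCountingSemigroup P)
    (s : ℕ) : P 0 s s = 1 := by
  simp [hP.init]

lemma MarkovCountingSemigroup.diag_add {P : ℝ → ℕ → ℕ → ℝ} (hP : MarkovCountingSemigroup P)
    (s : ℕ) (t u : ℝ) (ht : 0 ≤ t) (hu : 0 ≤ u) : P (t + u) s s = P t s s * P u s s := by
  rw [hP.chapman t u s s ht hu]
  refine tsum_eq_single s fun z hz => ?_
  rcases hz.lt_or_gt with h | h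
  · rw [hP.counting t s z ht h, zero_mul]
  · rw [hP.counting u z s hu h, mul_zero]

lemma MarkovCountingSemigroup.diag_natCast {P : ℝ → ℕ → ℕ → ℝ}
    (hP : MarkovCountingSemigroup P) (s n : ℕ) : P n s s = P 1 s s ^ n := by
  simpa using map_natCast_mul_of_add (d := fun t => P t s s) (hP.diag_zero s) (hP.diag_add s)
    zero_le_one n

lemma tsum_poissonPMF_mul_pow (t a : ℝ) :
    ∑' n, poissonPMF t n * a ^ n = Real.exp (t * (a - 1)) := by
  have hsum := (NormedSpace.expSeries_div_hasSum_exp (t * a)).mul_left (Real.exp (-t))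
  rw [← Real.exp_eq_exp_ℝ] at hsum
  rw [mul_sub, mul_one, sub_eq_neg_add, Real.exp_add, ← hsum.tsum_eq]
  refine tsum_congr fun n => ?_
  rw [poissonPMF, mul_pow]
  ring

lemma MarkovCountingSemigroup.timeChanged_diag {P : ℝ → ℕ → ℕ → ℝ}
    (hP : MarkovCountingSemigroup P) (s : ℕ) (t : ℝ) :
    timeChanged P t s s = Real.exp (t * (P 1 s s - 1)) := by
  rw [timeChanged, ← tsum_poissonPMF_mul_pow]
  simp_rw [hP.diag_natCast]

lemma tendsto_one_sub_exp_mul_div (c : ℝ) :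
    Tendsto (fun h : ℝ => (1 - Real.exp (h * c)) / h) (𝓝[≠] 0) (𝓝 (-c)) := by
  have hderiv : HasDerivAt (fun h : ℝ => Real.exp (h * c)) c 0 := by
    simpa using ((hasDerivAt_id 0).mul_const c).exp
  refine (hasDerivAt_iff_tendsto_slope.1 hderiv).neg.congr fun h => ?_
  simp only [slope_def_field, zero_mul, Real.exp_zero]
  ring

/-- Under the hypotheses of the time-change theorem, the rate function of
the time-changed process `S(t) = X(N(t))` is `λ_S(s) = 1 - exp (-λ_X(s))`. -/
theorem stmt1 (P : ℝ → ℕ → ℕ → ℝ) (lam : ℕ → ℝ)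
    (hP : MarkovCountingSemigroup P) (hSS : IsSimpleStable P lam) :
    ∀ s : ℕ, Tendsto (fun h : ℝ => (1 - timeChanged P h s s) / h) (𝓝[>] 0)
      (𝓝 (1 - Real.exp (-lam s))) := by
  intro s
  have hunit : P 1 s s = Real.exp (-lam s) :=
    eq_exp_of_add_of_tendsto (d := fun t => P t s s) (hP.diag_zero s) (hP.diag_add s) (hSS.1 s)
  simp_rw [hP.timeChanged_diag s, hunit]
  convert (tendsto_one_sub_exp_mul_div _).mono_left (nhdsGT_le_nhdsNE 0) using 2
  ring
end
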